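/- arXiv:1902.05788 — 3 statements merged into one kernel-verified Lean document; each statement's English description precedes it below -/
import Mathlib

section
/- Let C be an lfp category in which finitely generated objects are closed under kernel pairs and every strong epimorphism is a regular epimorphism. Then every finitely generated object of C is finitely presentable. -/
open CategoryTheory Limits Opposite Function

universe w v u

/-- An object is finitely presentable if its hom-functor preserves filtered colimits. -/
def IsFinitelyPresentable {C : Type u} [Category.{v} C] (A : C) : Prop :=
  ∀ (J : Type v) [SmallCategory J] [IsFiltered J] (Dg : J ⥤ C) (cc : Cocone Dg),
    Nonempty (IsColimit cc) → Nonempty (IsColimit ((coyoneda.obj (op A)).mapCocone cc))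

/-- A diagram of monomorphisms. -/
def MonoDiagram {C : Type u} [Category.{v} C] {J : Type*} [Category J] (Dg : J ⥤ C) : Prop :=
  ∀ ⦃i j : J⦄ (f : i ⟶ j), Mono (Dg.map f)

/-- An object is finitely generated if its hom-functor preserves filtered colimits of
monomorphisms. -/
def IsFinitelyGenerated {C : Type u} [Category.{v} C] (A : C) : Prop :=
  ∀ (J : Type v) [SmallCategory J] [IsFiltered J] (Dg : J ⥤ C), MonoDiagram Dg →
    ∀ (cc : Cocone Dg),
      Nonempty (IsColimit cc) → Nonempty (IsColimit ((coyoneda.obj (op A)).mapCocone cc))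

/-- A locally finitely presentable category: cocomplete, with a small family representing
all finitely presentable objects, such that every object is a filtered colimit of
finitely presentable objects. -/
def IsLFP (C : Type u) [Category.{v} C] : Prop :=
  HasColimits C ∧
  (∃ (ι : Type v) (G : ι → C), (∀ i, _root_.IsFinitelyPresentable (G i)) ∧
    ∀ X : C, _root_.IsFinitelyPresentable X → ∃ i, Nonempty (X ≅ G i)) ∧
  ∀ X : C, ∃ (J : Type v) (_ : SmallCategory J) (_ : IsFiltered J) (Dg : J ⥤ C)
    (cc : Cocone Dg), (∀ j, _root_.IsFinitelyPresentable (Dg.obj j)) ∧ Nonempty (IsColimit cc) ∧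
    Nonempty (cc.pt ≅ X)

/-- A functor is finitary if it preserves filtered colimits. -/
def IsFinitary {C : Type u} [Category.{v} C] {B : Type w} [Category.{v} B] (F : C ⥤ B) : Prop :=
  ∀ (J : Type v) [SmallCategory J] [IsFiltered J] (Dg : J ⥤ C) (cc : Cocone Dg),
    Nonempty (IsColimit cc) → Nonempty (IsColimit (F.mapCocone cc))

/-- A functor preserves filtered colimits of monomorphisms. -/
def PreservesFilteredColimitsOfMonos {C : Type u} [Category.{v} C] {B : Type w} [Category.{v} B]
    (F : C ⥤ B) : Prop :=
  ∀ (J : Type v) [SmallCategory J] [IsFiltered J] (Dg : J ⥤ C), MonoDiagram Dg →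
    ∀ (cc : Cocone Dg), Nonempty (IsColimit cc) → Nonempty (IsColimit (F.mapCocone cc))

/-- A functor is finitely bounded if every finitely generated subobject of `F.obj A`
factorizes through the `F`-image of a finitely generated subobject of `A`. -/
def FinitelyBounded {C : Type u} [Category.{v} C] {B : Type w} [Category.{v} B]
    (F : C ⥤ B) : Prop :=
  ∀ (A : C) (M₀ : B) (m₀ : M₀ ⟶ F.obj A), Mono m₀ → IsFinitelyGenerated M₀ →
    ∃ (M : C) (m : M ⟶ A), Mono m ∧ IsFinitelyGenerated M ∧
      ∃ g : M₀ ⟶ F.obj M, g ≫ F.map m = m₀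

/-- A morphism is finitary if it factorizes through a finitely presentable object. -/
def FinitaryMorphism {C : Type u} [Category.{v} C] {X Y : C} (u : X ⟶ Y) : Prop :=
  ∃ (Z : C) (v : X ⟶ Z) (w : Z ⟶ Y), _root_.IsFinitelyPresentable Z ∧ v ≫ w = u

/-- A strictly locally finitely presentable category: every object has, for each
finitely generated subobject, a finitary endomorphism fixing that subobject. -/
def StrictlyLFP (C : Type u) [Category.{v} C] : Prop :=
  IsLFP C ∧
  ∀ (A M : C) (m : M ⟶ A), Mono m → IsFinitelyGenerated M →
    ∃ u : A ⟶ A, FinitaryMorphism u ∧ m ≫ u = m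

namespace Stmt15Aux

variable {C : Type u} [Category.{v} C]

lemma fp_surj {A : C} (hA : _root_.IsFinitelyPresentable A) {J : Type v} [SmallCategory J]
    [IsFiltered J] {Dg : J ⥤ C} {cc : Cocone Dg} (hcc : IsColimit cc) (t : A ⟶ cc.pt) :
    ∃ (j : J) (h : A ⟶ Dg.obj j), h ≫ cc.ι.app j = t := by
  obtain ⟨hm⟩ := hA J Dg cc ⟨hcc⟩
  obtain ⟨j, y, hy⟩ := Types.jointly_surjective _ hm t
  exact ⟨j, y, hy⟩

lemma fp_merge {A : C} (hA : _root_.IsFinitelyPresentable A) {J : Type v} [SmallCategory J]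
    [IsFiltered J] {Dg : J ⥤ C} {cc : Cocone Dg} (hcc : IsColimit cc) {j : J}
    (x y : A ⟶ Dg.obj j) (h : x ≫ cc.ι.app j = y ≫ cc.ι.app j) :
    ∃ (l : J) (f : j ⟶ l), x ≫ Dg.map f = y ≫ Dg.map f := by
  obtain ⟨hm⟩ := hA J Dg cc ⟨hcc⟩
  have h' : ((coyoneda.obj (op A)).mapCocone cc).ι.app j x
      = ((coyoneda.obj (op A)).mapCocone cc).ι.app j y := h
  obtain ⟨k, f, g, hfg⟩ := (Types.FilteredColimit.isColimit_eq_iff _ hm).1 h'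
  have hfg' : x ≫ Dg.map f = y ≫ Dg.map g := hfg
  refine ⟨IsFiltered.coeq f g, f ≫ IsFiltered.coeqHom f g, ?_⟩
  have hc := IsFiltered.coeq_condition f g
  calc x ≫ Dg.map (f ≫ IsFiltered.coeqHom f g)
      = (x ≫ Dg.map f) ≫ Dg.map (IsFiltered.coeqHom f g) := by simp
    _ = (y ≫ Dg.map g) ≫ Dg.map (IsFiltered.coeqHom f g) := by rw [hfg']
    _ = y ≫ Dg.map (g ≫ IsFiltered.coeqHom f g) := by simp
    _ = y ≫ Dg.map (f ≫ IsFiltered.coeqHom f g) := by rw [← hc]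

lemma mk_mapped_isColimit {A : C} {J : Type v} [SmallCategory J] [IsFiltered J] {Dg : J ⥤ C}
    (cc : Cocone Dg)
    (hsurj : ∀ t : A ⟶ cc.pt, ∃ (j : J) (h : A ⟶ Dg.obj j), h ≫ cc.ι.app j = t)
    (hmerge : ∀ (j : J) (x y : A ⟶ Dg.obj j), x ≫ cc.ι.app j = y ≫ cc.ι.app j →
      ∃ (l : J) (f : j ⟶ l), x ≫ Dg.map f = y ≫ Dg.map f) :
    Nonempty (IsColimit ((coyoneda.obj (op A)).mapCocone cc)) := by
  refine ⟨Types.FilteredColimit.isColimitOf _ _ ?_ ?_⟩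
  · intro t
    obtain ⟨j, h, hh⟩ := hsurj t
    exact ⟨j, h, hh.symm⟩
  · intro i j xi xj hx
    have hx' : (xi ≫ Dg.map (IsFiltered.leftToMax i j)) ≫ cc.ι.app (IsFiltered.max i j)
        = (xj ≫ Dg.map (IsFiltered.rightToMax i j)) ≫ cc.ι.app (IsFiltered.max i j) := by
      have h1 := cc.w (IsFiltered.leftToMax i j)
      have h2 := cc.w (IsFiltered.rightToMax i j)
      have hx'' : xi ≫ cc.ι.app i = xj ≫ cc.ι.app j := hx
      rw [Category.assoc, Category.assoc, h1, h2, hx'']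
    obtain ⟨l, f, hf⟩ := hmerge _ _ _ hx'
    refine ⟨l, IsFiltered.leftToMax i j ≫ f, IsFiltered.rightToMax i j ≫ f, ?_⟩
    show xi ≫ Dg.map (IsFiltered.leftToMax i j ≫ f) = xj ≫ Dg.map (IsFiltered.rightToMax i j ≫ f)
    simpa using hf

/-- a presentation of `X` as a filtered colimit of finitely presentables, with an iso to `X`. -/
lemma exists_presentation (hC : IsLFP C) (X : C) :
    ∃ (J : Type v) (_ : SmallCategory J) (_ : IsFiltered J) (F : J ⥤ C)
      (cc : Cocone F) (_ : IsColimit cc) (_ : cc.pt ≅ X),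
      ∀ j, _root_.IsFinitelyPresentable (F.obj j) := by
  obtain ⟨J, SC, IF, F, cc, hfp, ⟨hcolim⟩, ⟨iso⟩⟩ := hC.2.2 X
  exact ⟨J, SC, IF, F, cc, hcolim, iso, hfp⟩

/-- two morphisms out of any object agree if they agree after composing with every morphism
from a finitely presentable object. -/
lemma generator_ext (hC : IsLFP C) {T Y : C} {x y : T ⟶ Y}
    (h : ∀ (P : C), _root_.IsFinitelyPresentable P → ∀ g : P ⟶ T, g ≫ x = g ≫ y) : x = y := by
  obtain ⟨J, SC, IF, F, cc, hcolim, iso, hfp⟩ := exists_presentation hC T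
  have hxy : iso.hom ≫ x = iso.hom ≫ y := by
    refine hcolim.hom_ext fun j => ?_
    have := h (F.obj j) (hfp j) (cc.ι.app j ≫ iso.hom)
    simpa using this
  calc x = iso.inv ≫ iso.hom ≫ x := by simp
    _ = iso.inv ≫ iso.hom ≫ y := by rw [hxy]
    _ = y := by simp

lemma fp_of_iso {A B : C} (e : A ≅ B) (hB : _root_.IsFinitelyPresentable B) :
    _root_.IsFinitelyPresentable A := by
  intro J _ _ Dg cc ⟨hcc⟩
  refine mk_mapped_isColimit cc (fun t => ?_) (fun j x y h => ?_)
  · obtain ⟨j, h, hh⟩ := fp_surj hB hcc (e.inv ≫ t)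
    exact ⟨j, e.hom ≫ h, by rw [Category.assoc, hh]; simp⟩
  · obtain ⟨l, f, hf⟩ := fp_merge hB hcc (e.inv ≫ x) (e.inv ≫ y) (by
      rw [Category.assoc, Category.assoc, h])
    refine ⟨l, f, ?_⟩
    have := congrArg (fun z => e.hom ≫ z) hf
    simpa using this

universe v'

section Chain
variable [HasColimits C] {ι : Type v} (G : ι → C)

/-- Index of relations to kill. -/
def RelIx {Z A : C} (m : Z ⟶ A) : Type v :=
  Σ i : ι, {pq : (G i ⟶ Z) × (G i ⟶ Z) // pq.1 ≫ m = pq.2 ≫ m}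

noncomputable def relA {Z A : C} (m : Z ⟶ A) : (∐ fun r : RelIx G m => G r.1) ⟶ Z :=
  Sigma.desc fun r => r.2.1.1

noncomputable def relB {Z A : C} (m : Z ⟶ A) : (∐ fun r : RelIx G m => G r.1) ⟶ Z :=
  Sigma.desc fun r => r.2.1.2

lemma rel_w {Z A : C} (m : Z ⟶ A) : relA G m ≫ m = relB G m ≫ m := by
  ext r
  simp [relA, relB, r.2.2]

noncomputable def stepObj {Z A : C} (m : Z ⟶ A) : C := coequalizer (relA G m) (relB G m)

noncomputable def stepπ {Z A : C} (m : Z ⟶ A) : Z ⟶ stepObj G m := coequalizer.π _ _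

noncomputable def stepHom {Z A : C} (m : Z ⟶ A) : stepObj G m ⟶ A :=
  coequalizer.desc m (rel_w G m)

noncomputable instance {Z A : C} (m : Z ⟶ A) : IsRegularEpi (stepπ G m) :=
  inferInstanceAs (IsRegularEpi (coequalizer.π _ _))

lemma stepπ_stepHom {Z A : C} (m : Z ⟶ A) : stepπ G m ≫ stepHom G m = m :=
  coequalizer.π_desc _ _

lemma step_coeq {Z A : C} (m : Z ⟶ A) (r : RelIx G m) :
    r.2.1.1 ≫ stepπ G m = r.2.1.2 ≫ stepπ G m := by
  have h := coequalizer.condition (relA G m) (relB G m)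
  have h2 := congrArg (fun z => Sigma.ι (fun r : RelIx G m => G r.1) r ≫ z) h
  simpa [relA, relB, stepπ, stepObj] using h2

noncomputable def stepDesc {Z A Y : C} (m : Z ⟶ A) (d : Z ⟶ Y)
    (hd : ∀ r : RelIx G m, r.2.1.1 ≫ d = r.2.1.2 ≫ d) : stepObj G m ⟶ Y :=
  coequalizer.desc d (by ext r; simp [relA, relB, hd r])

lemma stepπ_stepDesc {Z A Y : C} (m : Z ⟶ A) (d : Z ⟶ Y)
    (hd : ∀ r : RelIx G m, r.2.1.1 ≫ d = r.2.1.2 ≫ d) :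
    stepπ G m ≫ stepDesc G m d hd = d :=
  coequalizer.π_desc _ _

variable {X A : C} (u : X ⟶ A)

noncomputable def chain : ∀ _ : ℕ, Σ' Z : C, Z ⟶ A
  | 0 => ⟨X, u⟩
  | n+1 => ⟨stepObj G (chain n).2, stepHom G (chain n).2⟩

noncomputable def chainπ (n : ℕ) : (chain G u n).1 ⟶ (chain G u (n+1)).1 :=
  stepπ G (chain G u n).2

noncomputable instance (n : ℕ) : Epi (chainπ G u n) :=
  inferInstanceAs (Epi (stepπ G (chain G u n).2))

lemma chain_coeq (n : ℕ) (r : RelIx G (chain G u n).2) :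
    r.2.1.1 ≫ chainπ G u n = r.2.1.2 ≫ chainπ G u n :=
  step_coeq G (chain G u n).2 r

lemma chainπ_stepDesc {Y : C} (n : ℕ) (d : (chain G u n).1 ⟶ Y)
    (hd : ∀ r : RelIx G (chain G u n).2, r.2.1.1 ≫ d = r.2.1.2 ≫ d) :
    chainπ G u n ≫ stepDesc G (chain G u n).2 d hd = d :=
  stepπ_stepDesc G (chain G u n).2 d hd

noncomputable def chainF : ℕ ⥤ C := Functor.ofSequence (chainπ G u)

lemma chainF_map_succ (n : ℕ) :
    (chainF G u).map (homOfLE (n.le_add_right 1)) = chainπ G u n :=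
  Functor.ofSequence_map_homOfLE_succ _ n

end Chain

/-- universe-lifted naturals as an index category. -/
def NatIx : Type v' := ULift ℕ
noncomputable instance : LinearOrder NatIx.{v'} := inferInstanceAs (LinearOrder (ULift ℕ))
instance : Nonempty NatIx.{v'} := ⟨ULift.up 0⟩
noncomputable def mkIx (n : ℕ) : NatIx.{v'} := ULift.up n

/-- the down functor from the universe-lifted naturals. -/
noncomputable def DF : NatIx.{v'} ⥤ ℕ where
  obj x := ULift.down x
  map {x y} f := homOfLE (by have h : x ≤ y := leOfHom f; exact h)
  map_id _ := Subsingleton.elim _ _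
  map_comp _ _ := Subsingleton.elim _ _

/-- the successor morphism in `NatIx`. -/
noncomputable def succHom (n : ℕ) : (mkIx.{v'} n) ⟶ (mkIx.{v'} (n+1)) :=
  homOfLE (show mkIx.{v'} n ≤ mkIx.{v'} (n+1) by exact Nat.le_add_right n 1)

section Chain2
variable [HasColimits C] {ι : Type v} (G : ι → C)
variable {X A : C} (u : X ⟶ A)

noncomputable def chainF' : NatIx.{v} ⥤ C := DF.{v} ⋙ chainF G u

lemma chainF'_map_succ (n : ℕ) : (chainF' G u).map (succHom.{v} n) = chainπ G u n := by
  show (chainF G u).map (DF.{v}.map (succHom n)) = chainπ G u n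
  have h : DF.{v}.map (succHom n) = homOfLE (Nat.le_add_right n 1) := Subsingleton.elim _ _
  rw [h]
  exact chainF_map_succ G u n

noncomputable def Xinf : C := colimit (chainF' G u)

noncomputable def ιInf (n : ℕ) : (chain G u n).1 ⟶ Xinf G u :=
  colimit.ι (chainF' G u) (mkIx n)

lemma chain_w (n : ℕ) : chainπ G u n ≫ ιInf G u (n+1) = ιInf G u n := by
  have h := colimit.w (chainF' G u) (succHom.{v} n)
  rw [chainF'_map_succ] at h
  exact h

noncomputable def eMap : X ⟶ Xinf G u := ιInf G u 0

noncomputable def chainCocone : Cocone (chainF G u) where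
  pt := A
  ι := NatTrans.ofSequence (F := chainF G u) (G := (Functor.const ℕ).obj A)
    (fun n => (chain G u n).2)
    (fun n => by
      rw [chainF_map_succ G u n]
      show chainπ G u n ≫ (chain G u (n+1)).2 = (chain G u n).2 ≫ 𝟙 A
      rw [Category.comp_id]
      exact stepπ_stepHom G (chain G u n).2)

noncomputable def mMap : Xinf G u ⟶ A :=
  colimit.desc _ ((chainCocone G u).whisker (DF.{v}))

lemma ι_mMap (n : ℕ) : ιInf G u n ≫ mMap G u = (chain G u n).2 :=
  colimit.ι_desc _ (mkIx n)

lemma eMap_mMap : eMap G u ≫ mMap G u = u := ι_mMap G u 0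

lemma epi_eMap : Epi (eMap G u) := by
  constructor
  intro Z s t hst
  have key : ∀ n : ℕ, ιInf G u n ≫ s = ιInf G u n ≫ t := by
    intro n
    induction n with
    | zero => exact hst
    | succ n ih =>
      have h := chain_w G u n
      have h2 : chainπ G u n ≫ ιInf G u (n+1) ≫ s = chainπ G u n ≫ ιInf G u (n+1) ≫ t := by
        rw [← Category.assoc, h, ih, ← h, Category.assoc]
      exact (cancel_epi (chainπ G u n)).1 h2
  refine colimit.hom_ext fun j => ?_
  obtain ⟨n⟩ := j
  exact key n

lemma liftCoeq {Y Z : C} (z : Y ⟶ Z) [Mono z] (h : Xinf G u ⟶ Z) (n : ℕ)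
    (d : (chain G u n).1 ⟶ Y) (hd : d ≫ z = ιInf G u n ≫ h) :
    ∀ r : RelIx G (chain G u n).2, r.2.1.1 ≫ d = r.2.1.2 ≫ d := by
  intro r
  have h1 : r.2.1.1 ≫ ιInf G u n = r.2.1.2 ≫ ιInf G u n := by
    rw [← chain_w G u n, ← Category.assoc, ← Category.assoc, chain_coeq G u n r]
  have h2 : (r.2.1.1 ≫ d) ≫ z = (r.2.1.2 ≫ d) ≫ z := by
    rw [Category.assoc, Category.assoc, hd, ← Category.assoc, ← Category.assoc, h1]
  exact (cancel_mono z).1 h2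

noncomputable def liftSeq {Y Z : C} (z : Y ⟶ Z) [Mono z] (f0 : X ⟶ Y) (h : Xinf G u ⟶ Z)
    (hcomm : f0 ≫ z = eMap G u ≫ h) :
    ∀ n : ℕ, {d : (chain G u n).1 ⟶ Y // d ≫ z = ιInf G u n ≫ h}
  | 0 => ⟨f0, hcomm⟩
  | n+1 =>
    ⟨stepDesc G (chain G u n).2 (liftSeq z f0 h hcomm n).1
        (liftCoeq G u z h n (liftSeq z f0 h hcomm n).1 (liftSeq z f0 h hcomm n).2),
     by
      have h3 : chainπ G u n ≫ (stepDesc G (chain G u n).2 (liftSeq z f0 h hcomm n).1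
            (liftCoeq G u z h n (liftSeq z f0 h hcomm n).1 (liftSeq z f0 h hcomm n).2)) ≫ z
          = chainπ G u n ≫ ιInf G u (n+1) ≫ h := by
        erw [← Category.assoc, chainπ_stepDesc, ← Category.assoc, chain_w,
          (liftSeq z f0 h hcomm n).2]
      exact (cancel_epi (chainπ G u n)).1 h3⟩

lemma strongEpi_eMap : StrongEpi (eMap G u) := by
  haveI := epi_eMap G u
  refine StrongEpi.mk' (fun Y Z z hz f0 h sq => ?_)
  haveI : Mono z := hz
  let d := liftSeq G u z f0 h sq.w
  have hnat : ∀ n : ℕ, chainπ G u n ≫ (d (n+1)).1 = (d n).1 := by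
    intro n
    exact chainπ_stepDesc G u n (d n).1 (liftCoeq G u z h n (d n).1 (d n).2)
  let cocY : Cocone (chainF G u) :=
    { pt := Y
      ι := NatTrans.ofSequence (F := chainF G u) (G := (Functor.const ℕ).obj Y)
        (fun n => (d n).1)
        (fun n => by
          rw [chainF_map_succ G u n]
          show chainπ G u n ≫ (d (n+1)).1 = (d n).1 ≫ 𝟙 Y
          rw [Category.comp_id]
          exact hnat n) }
  refine CommSq.HasLift.mk' ⟨colimit.desc _ (cocY.whisker (DF.{v})), ?_, ?_⟩
  · show ιInf G u 0 ≫ colimit.desc _ (cocY.whisker (DF.{v})) = f0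
    exact colimit.ι_desc _ (mkIx 0)
  · refine colimit.hom_ext fun j => ?_
    obtain ⟨n⟩ := j
    have h1 : ιInf G u n ≫ colimit.desc _ (cocY.whisker (DF.{v})) = (d n).1 :=
      colimit.ι_desc _ (mkIx n)
    show ιInf G u n ≫ colimit.desc _ (cocY.whisker (DF.{v})) ≫ z = ιInf G u n ≫ h
    erw [← Category.assoc, h1, (d n).2]

end Chain2

section Factor
variable [HasColimits C] {ι : Type v} (G : ι → C)

lemma mono_mMap (hC : IsLFP C)
    (hrep : ∀ P : C, _root_.IsFinitelyPresentable P → ∃ i, Nonempty (P ≅ G i))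
    {X A : C} (u : X ⟶ A) : Mono (mMap G u) := by
  constructor
  intro T a b hab
  apply generator_ext hC
  intro P hP g
  have hcc : IsColimit (colimit.cocone (chainF' G u)) := colimit.isColimit _
  obtain ⟨j1, α1, hα1⟩ := fp_surj hP hcc (g ≫ a)
  obtain ⟨j2, β2, hβ2⟩ := fp_surj hP hcc (g ≫ b)
  set n : ℕ := max (ULift.down j1) (ULift.down j2) with hn
  have f1 : j1 ⟶ mkIx.{v} n := homOfLE (show j1 ≤ mkIx.{v} n by
    exact le_max_left (ULift.down j1) (ULift.down j2))
  have f2 : j2 ⟶ mkIx.{v} n := homOfLE (show j2 ≤ mkIx.{v} n by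
    exact le_max_right (ULift.down j1) (ULift.down j2))
  have hα : (α1 ≫ (chainF' G u).map f1) ≫ ιInf G u n = g ≫ a := by
    erw [Category.assoc]
    show α1 ≫ (chainF' G u).map f1 ≫ colimit.ι (chainF' G u) (mkIx n) = g ≫ a
    rw [colimit.w (chainF' G u) f1]
    exact hα1
  have hβ : (β2 ≫ (chainF' G u).map f2) ≫ ιInf G u n = g ≫ b := by
    erw [Category.assoc]
    show β2 ≫ (chainF' G u).map f2 ≫ colimit.ι (chainF' G u) (mkIx n) = g ≫ b
    rw [colimit.w (chainF' G u) f2]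
    exact hβ2
  set αn : P ⟶ (chain G u n).1 := α1 ≫ (chainF' G u).map f1 with hαn
  set βn : P ⟶ (chain G u n).1 := β2 ≫ (chainF' G u).map f2 with hβn
  have hm : αn ≫ (chain G u n).2 = βn ≫ (chain G u n).2 := by
    erw [← ι_mMap G u n, ← Category.assoc, ← Category.assoc, hα, hβ,
      Category.assoc, Category.assoc, hab]
  obtain ⟨i, ⟨ψ⟩⟩ := hrep P hP
  have hr : (ψ.inv ≫ αn) ≫ (chain G u n).2 = (ψ.inv ≫ βn) ≫ (chain G u n).2 := by
    have h' := congrArg (fun z => ψ.inv ≫ z) hm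
    simp only [Category.assoc] at h' ⊢
    exact h' 
  have hco := chain_coeq G u n ⟨i, ⟨(ψ.inv ≫ αn, ψ.inv ≫ βn), hr⟩⟩
  have hco' : αn ≫ chainπ G u n = βn ≫ chainπ G u n := by
    have := congrArg (fun z => ψ.hom ≫ z) hco
    simpa using this
  calc g ≫ a = αn ≫ ιInf G u n := hα.symm
    _ = αn ≫ chainπ G u n ≫ ιInf G u (n+1) := by rw [chain_w]
    _ = βn ≫ chainπ G u n ≫ ιInf G u (n+1) := by
        rw [← Category.assoc, hco', Category.assoc]
    _ = βn ≫ ιInf G u n := by rw [chain_w]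
    _ = g ≫ b := hβ

end Factor

/-- every morphism factors as a strong epimorphism followed by a monomorphism. -/
lemma factor_strongEpi_mono (hC : IsLFP C) {X A : C} (u : X ⟶ A) :
    ∃ (I : C) (e : X ⟶ I) (m : I ⟶ A), StrongEpi e ∧ Mono m ∧ e ≫ m = u := by
  haveI : HasColimits C := hC.1
  obtain ⟨ι, G, hGfp, hrep⟩ := hC.2.1
  exact ⟨Xinf G u, eMap G u, mMap G u, strongEpi_eMap G u,
    mono_mMap G hC hrep u, eMap_mMap G u⟩

/-- every finitely generated object is a strong quotient of a finitely presentable object. -/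
lemma fg_strong_quotient (hC : IsLFP C) {A : C} (hA : IsFinitelyGenerated A) :
    ∃ (B : C) (e : B ⟶ A), _root_.IsFinitelyPresentable B ∧ StrongEpi e := by
  obtain ⟨J, SC, IF, F, cc, hcolim, iso, hfp⟩ := exists_presentation hC A
  let cc' : Cocone F :=
    { pt := A
      ι :=
        { app := fun j => cc.ι.app j ≫ iso.hom
          naturality := fun i j f => by
            dsimp
            rw [Category.comp_id, ← Category.assoc, cc.w f] } }
  have hc' : IsColimit cc' := hcolim.ofIsoColimit (Cocones.ext iso (fun j => rfl))
  choose I e m he hm hfac using fun j => factor_strongEpi_mono hC (cc'.ι.app j)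
  haveI : ∀ j, StrongEpi (e j) := he
  haveI : ∀ j, Mono (m j) := hm
  have hsq : ∀ {i j : J} (f : i ⟶ j), CommSq (F.map f ≫ e j) (e i) (m j) (m i) := by
    intro i j f
    constructor
    rw [Category.assoc, hfac j, hfac i, cc'.w f]
  let IM : J ⥤ C :=
    { obj := I
      map := fun {i j} f => (hsq f).lift
      map_id := fun i => by
        refine (cancel_epi (e i)).1 ?_
        rw [(hsq (𝟙 i)).fac_left, F.map_id, Category.id_comp, Category.comp_id]
      map_comp := fun {i j k} f g => by
        refine (cancel_epi (e i)).1 ?_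
        rw [(hsq (f ≫ g)).fac_left, ← Category.assoc, (hsq f).fac_left,
          Category.assoc, (hsq g).fac_left, F.map_comp, Category.assoc] }
  have hmono : MonoDiagram IM := by
    intro i j f
    exact mono_of_mono_fac ((hsq f).fac_right)
  let ccI : Cocone IM :=
    { pt := A
      ι :=
        { app := m
          naturality := fun i j f => by
            dsimp
            rw [Category.comp_id]
            exact (hsq f).fac_right } }
  let dcoc : Cocone IM → Cocone F := fun s =>
    { pt := s.pt
      ι :=
        { app := fun j => e j ≫ s.ι.app j
          naturality := fun i j f => by
            dsimp
            rw [Category.comp_id]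
            calc F.map f ≫ e j ≫ s.ι.app j = (F.map f ≫ e j) ≫ s.ι.app j := by
                  rw [Category.assoc]
              _ = (e i ≫ (hsq f).lift) ≫ s.ι.app j := by rw [(hsq f).fac_left]
              _ = e i ≫ ((hsq f).lift ≫ s.ι.app j) := by rw [Category.assoc]
              _ = e i ≫ (IM.map f ≫ s.ι.app j) := rfl
              _ = e i ≫ s.ι.app i := by rw [s.w f] } }
  have hcolimI : IsColimit ccI := by
    refine IsColimit.mk (fun s => hc'.desc (dcoc s)) (fun s j => ?_) (fun s m' hm' => ?_)
    · refine (cancel_epi (e j)).1 ?_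
      have h1 : ccI.ι.app j = m j := rfl
      rw [h1, ← Category.assoc, hfac j]
      exact hc'.fac (dcoc s) j
    · refine hc'.uniq (dcoc s) m' (fun j => ?_)
      have h1 : cc'.ι.app j = e j ≫ m j := (hfac j).symm
      rw [h1, Category.assoc, hm' j]
  obtain ⟨hmapped⟩ := hA J IM hmono ccI ⟨hcolimI⟩
  obtain ⟨j, s, hs⟩ := Types.jointly_surjective _ hmapped (𝟙 A)
  have hs' : s ≫ m j = 𝟙 A := hs
  haveI : IsSplitEpi (m j) := IsSplitEpi.mk' ⟨s, hs'⟩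
  haveI : IsIso (m j) := isIso_of_mono_of_isSplitEpi _
  refine ⟨F.obj j, cc'.ι.app j, hfp j, ?_⟩
  have h2 : cc'.ι.app j = e j ≫ m j := (hfac j).symm
  rw [h2]
  exact strongEpi_comp (e j) (m j)

section FiniteColim
variable [HasColimits C]

lemma fp_coprod {X Y : C} (hX : _root_.IsFinitelyPresentable X) (hY : _root_.IsFinitelyPresentable Y) :
    _root_.IsFinitelyPresentable (X ⨿ Y) := by
  intro J _ _ Dg cc ⟨hcc⟩
  refine mk_mapped_isColimit cc (fun t => ?_) (fun j u v huv => ?_)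
  · obtain ⟨j1, h1, hh1⟩ := fp_surj hX hcc (coprod.inl ≫ t)
    obtain ⟨j2, h2, hh2⟩ := fp_surj hY hcc (coprod.inr ≫ t)
    refine ⟨IsFiltered.max j1 j2,
      coprod.desc (h1 ≫ Dg.map (IsFiltered.leftToMax j1 j2))
        (h2 ≫ Dg.map (IsFiltered.rightToMax j1 j2)), ?_⟩
    apply coprod.hom_ext
    · rw [← Category.assoc, coprod.inl_desc, Category.assoc, cc.w, hh1]
    · rw [← Category.assoc, coprod.inr_desc, Category.assoc, cc.w, hh2]
  · obtain ⟨l1, f1, hf1⟩ := fp_merge hX hcc (coprod.inl ≫ u) (coprod.inl ≫ v) (by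
      rw [Category.assoc, Category.assoc, huv])
    obtain ⟨l2, f2, hf2⟩ := fp_merge hY hcc (coprod.inr ≫ u) (coprod.inr ≫ v) (by
      rw [Category.assoc, Category.assoc, huv])
    set g1 : j ⟶ IsFiltered.coeq (f1 ≫ IsFiltered.leftToMax l1 l2)
        (f2 ≫ IsFiltered.rightToMax l1 l2) :=
      (f1 ≫ IsFiltered.leftToMax l1 l2) ≫ IsFiltered.coeqHom _ _ with hg1
    have hg2 : g1 = (f2 ≫ IsFiltered.rightToMax l1 l2) ≫ IsFiltered.coeqHom _ _ := by
      rw [hg1, IsFiltered.coeq_condition]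
    refine ⟨_, g1, ?_⟩
    apply coprod.hom_ext
    · rw [← Category.assoc, ← Category.assoc, hg1, Dg.map_comp, Dg.map_comp,
        ← Category.assoc, ← Category.assoc, hf1]
      simp only [Category.assoc]
    · rw [← Category.assoc, ← Category.assoc, hg2, Dg.map_comp, Dg.map_comp,
        ← Category.assoc, ← Category.assoc, hf2]
      simp only [Category.assoc]

lemma fp_coequalizer {X Y : C} (f g : X ⟶ Y) (hX : _root_.IsFinitelyPresentable X)
    (hY : _root_.IsFinitelyPresentable Y) : _root_.IsFinitelyPresentable (coequalizer f g) := by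
  intro J _ _ Dg cc ⟨hcc⟩
  refine mk_mapped_isColimit cc (fun t => ?_) (fun j u v huv => ?_)
  · obtain ⟨j, h, hh⟩ := fp_surj hY hcc (coequalizer.π f g ≫ t)
    have hfg : (f ≫ h) ≫ cc.ι.app j = (g ≫ h) ≫ cc.ι.app j := by
      rw [Category.assoc, hh, Category.assoc, hh, ← Category.assoc, ← Category.assoc,
        coequalizer.condition]
    obtain ⟨l, w, hw⟩ := fp_merge hX hcc (f ≫ h) (g ≫ h) hfg
    have hw' : f ≫ (h ≫ Dg.map w) = g ≫ (h ≫ Dg.map w) := by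
      rw [← Category.assoc, ← Category.assoc]
      exact hw
    refine ⟨l, coequalizer.desc (h ≫ Dg.map w) hw', ?_⟩
    refine (cancel_epi (coequalizer.π f g)).1 ?_
    rw [← Category.assoc, coequalizer.π_desc, Category.assoc, cc.w, hh]
  · obtain ⟨l, w, hw⟩ := fp_merge hY hcc (coequalizer.π f g ≫ u) (coequalizer.π f g ≫ v) (by
      rw [Category.assoc, Category.assoc, huv])
    refine ⟨l, w, (cancel_epi (coequalizer.π f g)).1 ?_⟩
    rw [← Category.assoc, ← Category.assoc]
    exact hw

end FiniteColim

section KP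
variable {ι' : Type v} (G : ι' → C) {B A : C} (c : B ⟶ A)

/-- index category for the kernel pair of `c` as a filtered colimit. -/
@[nolint unusedArguments]
structure KPIdx {ι' : Type v} (G : ι' → C) {B A : C} (c : B ⟶ A) : Type v where
  i : ι'
  a : G i ⟶ B
  b : G i ⟶ B
  w : a ≫ c = b ≫ c

instance : SmallCategory (KPIdx G c) where
  Hom w1 w2 := {g : G w1.i ⟶ G w2.i // g ≫ w2.a = w1.a ∧ g ≫ w2.b = w1.b}
  id w := ⟨𝟙 _, by simp, by simp⟩
  comp {w1 w2 w3} f g := ⟨f.1 ≫ g.1,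
    by rw [Category.assoc, g.2.1, f.2.1], by rw [Category.assoc, g.2.2, f.2.2]⟩
  id_comp f := by apply Subtype.ext; simp
  comp_id f := by apply Subtype.ext; simp
  assoc f g h := by apply Subtype.ext; simp

/-- the canonical diagram for the kernel pair. -/
def KD : KPIdx G c ⥤ C where
  obj w := G w.i
  map f := f.1
  map_id _ := rfl
  map_comp _ _ := rfl

variable [HasColimits C]

noncomputable def KK : C := colimit (KD G c)

noncomputable def pCone : Cocone (KD G c) :=
  { pt := B
    ι := { app := fun w => w.a
           naturality := fun w1 w2 f => by
             dsimp [KD]; rw [Category.comp_id]; exact f.2.1 } }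

noncomputable def qCone : Cocone (KD G c) :=
  { pt := B
    ι := { app := fun w => w.b
           naturality := fun w1 w2 f => by
             dsimp [KD]; rw [Category.comp_id]; exact f.2.2 } }

noncomputable def pK : KK G c ⟶ B := colimit.desc _ (pCone G c)
noncomputable def qK : KK G c ⟶ B := colimit.desc _ (qCone G c)

lemma ι_pK (w : KPIdx G c) : colimit.ι (KD G c) w ≫ pK G c = w.a := colimit.ι_desc _ w
lemma ι_qK (w : KPIdx G c) : colimit.ι (KD G c) w ≫ qK G c = w.b := colimit.ι_desc _ w

lemma pq_w : pK G c ≫ c = qK G c ≫ c := by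
  refine colimit.hom_ext fun w => ?_
  erw [← Category.assoc, ← Category.assoc, ι_pK, ι_qK, w.w]; rfl

lemma kp_filtered (hGfp : ∀ i, _root_.IsFinitelyPresentable (G i))
    (hrep : ∀ P : C, _root_.IsFinitelyPresentable P → ∃ i, Nonempty (P ≅ G i))
    (hB : _root_.IsFinitelyPresentable B) : IsFiltered (KPIdx G c) := by
  obtain ⟨i0, ⟨φ0⟩⟩ := hrep B hB
  refine { nonempty := ⟨⟨i0, φ0.inv, φ0.inv, rfl⟩⟩, cocone_objs := ?_, cocone_maps := ?_ }
  · intro w1 w2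
    obtain ⟨i3, ⟨φ⟩⟩ := hrep (G w1.i ⨿ G w2.i) (fp_coprod (hGfp w1.i) (hGfp w2.i))
    have hw : (φ.inv ≫ coprod.desc w1.a w2.a) ≫ c = (φ.inv ≫ coprod.desc w1.b w2.b) ≫ c := by
      rw [Category.assoc, Category.assoc]
      congr 1
      apply coprod.hom_ext
      · rw [← Category.assoc, ← Category.assoc, coprod.inl_desc, coprod.inl_desc, w1.w]
      · rw [← Category.assoc, ← Category.assoc, coprod.inr_desc, coprod.inr_desc, w2.w]
    refine ⟨⟨i3, φ.inv ≫ coprod.desc w1.a w2.a, φ.inv ≫ coprod.desc w1.b w2.b, hw⟩,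
      ⟨coprod.inl ≫ φ.hom, ?_, ?_⟩, ⟨coprod.inr ≫ φ.hom, ?_, ?_⟩, trivial⟩
    · show (coprod.inl ≫ φ.hom) ≫ φ.inv ≫ coprod.desc w1.a w2.a = w1.a
      rw [Category.assoc, Iso.hom_inv_id_assoc, coprod.inl_desc]
    · show (coprod.inl ≫ φ.hom) ≫ φ.inv ≫ coprod.desc w1.b w2.b = w1.b
      rw [Category.assoc, Iso.hom_inv_id_assoc, coprod.inl_desc]
    · show (coprod.inr ≫ φ.hom) ≫ φ.inv ≫ coprod.desc w1.a w2.a = w2.a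
      rw [Category.assoc, Iso.hom_inv_id_assoc, coprod.inr_desc]
    · show (coprod.inr ≫ φ.hom) ≫ φ.inv ≫ coprod.desc w1.b w2.b = w2.b
      rw [Category.assoc, Iso.hom_inv_id_assoc, coprod.inr_desc]
  · intro w1 w2 f g
    obtain ⟨i3, ⟨φ⟩⟩ := hrep (coequalizer f.1 g.1)
      (fp_coequalizer f.1 g.1 (hGfp w1.i) (hGfp w2.i))
    have hfg_a : f.1 ≫ w2.a = g.1 ≫ w2.a := f.2.1.trans g.2.1.symm
    have hfg_b : f.1 ≫ w2.b = g.1 ≫ w2.b := f.2.2.trans g.2.2.symm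
    have hw : (φ.inv ≫ coequalizer.desc w2.a hfg_a) ≫ c
        = (φ.inv ≫ coequalizer.desc w2.b hfg_b) ≫ c := by
      rw [Category.assoc, Category.assoc]
      congr 1
      refine (cancel_epi (coequalizer.π f.1 g.1)).1 ?_
      rw [← Category.assoc, ← Category.assoc, coequalizer.π_desc, coequalizer.π_desc, w2.w]
    refine ⟨⟨i3, φ.inv ≫ coequalizer.desc w2.a hfg_a, φ.inv ≫ coequalizer.desc w2.b hfg_b, hw⟩,
      ⟨coequalizer.π f.1 g.1 ≫ φ.hom, ?_, ?_⟩, ?_⟩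
    · show (coequalizer.π f.1 g.1 ≫ φ.hom) ≫ φ.inv ≫ coequalizer.desc w2.a hfg_a = w2.a
      rw [Category.assoc, Iso.hom_inv_id_assoc, coequalizer.π_desc]
    · show (coequalizer.π f.1 g.1 ≫ φ.hom) ≫ φ.inv ≫ coequalizer.desc w2.b hfg_b = w2.b
      rw [Category.assoc, Iso.hom_inv_id_assoc, coequalizer.π_desc]
    · apply Subtype.ext
      show f.1 ≫ coequalizer.π f.1 g.1 ≫ φ.hom = g.1 ≫ coequalizer.π f.1 g.1 ≫ φ.hom
      rw [← Category.assoc, ← Category.assoc, coequalizer.condition]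

/-- canonical morphism into `KK` from a pair of morphisms with equal composites. -/
noncomputable def cano {P : C} {iP : ι'} (φP : P ≅ G iP) (a b : P ⟶ B)
    (hw : a ≫ c = b ≫ c) : P ⟶ KK G c :=
  φP.hom ≫ colimit.ι (KD G c) ⟨iP, φP.inv ≫ a, φP.inv ≫ b,
    by simp only [Category.assoc, hw]⟩

lemma cano_congr {P : C} {iP : ι'} (φP : P ≅ G iP) {a1 b1 a2 b2 : P ⟶ B}
    (h1 : a1 ≫ c = b1 ≫ c) (h2 : a2 ≫ c = b2 ≫ c) (ea : a1 = a2) (eb : b1 = b2) :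
    cano G c φP a1 b1 h1 = cano G c φP a2 b2 h2 := by
  subst ea; subst eb; rfl

lemma cano_pK {P : C} {iP : ι'} (φP : P ≅ G iP) (a b : P ⟶ B) (hw : a ≫ c = b ≫ c) :
    cano G c φP a b hw ≫ pK G c = a := by
  unfold cano
  erw [Category.assoc, ι_pK]
  show φP.hom ≫ φP.inv ≫ a = a
  rw [Iso.hom_inv_id_assoc]

lemma cano_qK {P : C} {iP : ι'} (φP : P ≅ G iP) (a b : P ⟶ B) (hw : a ≫ c = b ≫ c) :
    cano G c φP a b hw ≫ qK G c = b := by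
  unfold cano
  erw [Category.assoc, ι_qK]
  show φP.hom ≫ φP.inv ≫ b = b
  rw [Iso.hom_inv_id_assoc]

lemma kp_canonical (hGfp : ∀ i, _root_.IsFinitelyPresentable (G i))
    (hrep : ∀ P : C, _root_.IsFinitelyPresentable P → ∃ i, Nonempty (P ≅ G i))
    (hB : _root_.IsFinitelyPresentable B)
    {P : C} (hP : _root_.IsFinitelyPresentable P) {iP : ι'} (φP : P ≅ G iP) (s : P ⟶ KK G c) :
    s = cano G c φP (s ≫ pK G c) (s ≫ qK G c)
      (by simp only [Category.assoc, pq_w G c]) := by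
  haveI := kp_filtered G c hGfp hrep hB
  obtain ⟨w, α, hα⟩ := fp_surj hP (colimit.isColimit (KD G c)) s
  have hα' : α ≫ colimit.ι (KD G c) w = s := hα
  have ha : (φP.inv ≫ α) ≫ w.a = φP.inv ≫ (s ≫ pK G c) := by
    erw [← ι_pK G c w, Category.assoc, ← Category.assoc α, hα']; rfl
  have hb : (φP.inv ≫ α) ≫ w.b = φP.inv ≫ (s ≫ qK G c) := by
    erw [← ι_qK G c w, Category.assoc, ← Category.assoc α, hα']; rfl
  have hcw' : (φP.inv ≫ α) ≫ colimit.ι (KD G c) w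
      = colimit.ι (KD G c) ⟨iP, φP.inv ≫ (s ≫ pK G c), φP.inv ≫ (s ≫ qK G c),
          by simp only [Category.assoc, pq_w G c]⟩ :=
    colimit.w (KD G c)
      (⟨φP.inv ≫ α, ha, hb⟩ :
        (⟨iP, φP.inv ≫ (s ≫ pK G c), φP.inv ≫ (s ≫ qK G c),
          by simp only [Category.assoc, pq_w G c]⟩ : KPIdx G c) ⟶ w)
  unfold cano
  rw [← hcw']
  erw [← Category.assoc, ← Category.assoc, Iso.hom_inv_id, Category.id_comp]
  exact hα'.symm

lemma kp_hom_ext (hC : IsLFP C) (hGfp : ∀ i, _root_.IsFinitelyPresentable (G i))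
    (hrep : ∀ P : C, _root_.IsFinitelyPresentable P → ∃ i, Nonempty (P ≅ G i))
    (hB : _root_.IsFinitelyPresentable B)
    {T : C} (t t' : T ⟶ KK G c) (hp : t ≫ pK G c = t' ≫ pK G c)
    (hq : t ≫ qK G c = t' ≫ qK G c) : t = t' := by
  apply generator_ext hC
  intro P hP g
  obtain ⟨iP, ⟨φP⟩⟩ := hrep P hP
  have h1 := kp_canonical G c hGfp hrep hB hP φP (g ≫ t)
  have h2 := kp_canonical G c hGfp hrep hB hP φP (g ≫ t')
  rw [h1, h2]
  exact cano_congr G c φP _ _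
    (by simp only [Category.assoc, hp]) (by simp only [Category.assoc, hq])

lemma kp_lift (hC : IsLFP C) (hGfp : ∀ i, _root_.IsFinitelyPresentable (G i))
    (hrep : ∀ P : C, _root_.IsFinitelyPresentable P → ∃ i, Nonempty (P ≅ G i))
    (hB : _root_.IsFinitelyPresentable B)
    {T : C} (f g : T ⟶ B) (hfg : f ≫ c = g ≫ c) :
    ∃ t : T ⟶ KK G c, t ≫ pK G c = f ∧ t ≫ qK G c = g := by
  obtain ⟨J, SC, IF, F, tc, htc, isoT, hfpT⟩ := exists_presentation hC T
  choose iF hψ using fun j => hrep (F.obj j) (hfpT j)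
  have hw : ∀ j : J, ((tc.ι.app j ≫ isoT.hom) ≫ f) ≫ c = ((tc.ι.app j ≫ isoT.hom) ≫ g) ≫ c := by
    intro j; simp only [Category.assoc, hfg]
  let χ : Cocone F :=
    { pt := KK G c
      ι :=
        { app := fun j => cano G c (hψ j).some ((tc.ι.app j ≫ isoT.hom) ≫ f)
            ((tc.ι.app j ≫ isoT.hom) ≫ g) (hw j)
          naturality := fun i j k => by
            dsimp
            rw [Category.comp_id]
            refine kp_hom_ext G c hC hGfp hrep hB _ _ ?_ ?_
            · rw [Category.assoc, cano_pK, cano_pK]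
              simp only [← Category.assoc]
              rw [tc.w k]
            · rw [Category.assoc, cano_qK, cano_qK]
              simp only [← Category.assoc]
              rw [tc.w k] } }
  have hχ : ∀ j, χ.ι.app j = cano G c (hψ j).some ((tc.ι.app j ≫ isoT.hom) ≫ f)
      ((tc.ι.app j ≫ isoT.hom) ≫ g) (hw j) := fun j => rfl
  refine ⟨isoT.inv ≫ htc.desc χ, ?_, ?_⟩
  · have h1 : htc.desc χ ≫ pK G c = isoT.hom ≫ f := by
      refine htc.hom_ext fun j => ?_
      rw [← Category.assoc, htc.fac χ j, hχ j, cano_pK]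
      simp only [Category.assoc]
    rw [Category.assoc, h1, Iso.inv_hom_id_assoc]
  · have h1 : htc.desc χ ≫ qK G c = isoT.hom ≫ g := by
      refine htc.hom_ext fun j => ?_
      rw [← Category.assoc, htc.fac χ j, hχ j, cano_qK]
      simp only [Category.assoc]
    rw [Category.assoc, h1, Iso.inv_hom_id_assoc]

end KP

lemma exists_kernelPair (hC : IsLFP C) {B A : C} (c : B ⟶ A) (hB : _root_.IsFinitelyPresentable B) :
    ∃ (K : C) (p q : K ⟶ B), IsPullback p q c c := by
  haveI : HasColimits C := hC.1
  obtain ⟨ι', G, hGfp, hrep⟩ := hC.2.1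
  refine ⟨KK G c, pK G c, qK G c, ?_⟩
  have hlift := fun (T : C) (f g : T ⟶ B) (hfg : f ≫ c = g ≫ c) =>
    kp_lift G c hC hGfp hrep hB f g hfg
  refine IsPullback.of_isLimit (PullbackCone.IsLimit.mk (pq_w G c)
    (fun s => (hlift s.pt s.fst s.snd s.condition).choose)
    (fun s => (hlift s.pt s.fst s.snd s.condition).choose_spec.1)
    (fun s => (hlift s.pt s.fst s.snd s.condition).choose_spec.2)
    (fun s m hm1 hm2 => ?_))
  refine kp_hom_ext G c hC hGfp hrep hB m _ ?_ ?_
  · rw [hm1, (hlift s.pt s.fst s.snd s.condition).choose_spec.1]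
  · rw [hm2, (hlift s.pt s.fst s.snd s.condition).choose_spec.2]

lemma regular_desc {B A : C} (e : B ⟶ A) (re : RegularEpi e) {K : C} {p q : K ⟶ B}
    (hpb : IsPullback p q e e) {Z : C} (h : B ⟶ Z) (hh : p ≫ h = q ≫ h) :
    ∃ d : A ⟶ Z, e ≫ d = h := by
  have hφp : hpb.lift re.left re.right re.w ≫ p = re.left := hpb.lift_fst _ _ _
  have hφq : hpb.lift re.left re.right re.w ≫ q = re.right := hpb.lift_snd _ _ _
  have hlr : re.left ≫ h = re.right ≫ h := by
    calc re.left ≫ h = (hpb.lift re.left re.right re.w ≫ p) ≫ h := by rw [hφp]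
      _ = (hpb.lift re.left re.right re.w ≫ q) ≫ h := by
          rw [Category.assoc, hh, ← Category.assoc]
      _ = re.right ≫ h := by rw [hφq]
  obtain ⟨d, hd⟩ := Cofork.IsColimit.desc' re.isColimit h hlr
  exact ⟨d, hd⟩

lemma fp_fg {B : C} (hB : _root_.IsFinitelyPresentable B) : IsFinitelyGenerated B :=
  fun J _ _ Dg _ cc h => hB J Dg cc h


end Stmt15Aux

/-- In an lfp category in which finitely generated objects are closed under kernel pairs
and strong epimorphisms are regular, every finitely generated object is finitely
presentable. -/
theorem stmt_15 {C : Type u} [Category.{v} C] (hC : IsLFP C)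
    (hker : ∀ {X Y K : C} (c : X ⟶ Y) (p q : K ⟶ X), IsFinitelyGenerated X →
      IsPullback p q c c → IsFinitelyGenerated K)
    (hreg : ∀ {X Y : C} (e : X ⟶ Y), StrongEpi e → Nonempty (RegularEpi e)) :
    ∀ A : C, IsFinitelyGenerated A → _root_.IsFinitelyPresentable A := by
  intro A hA
  obtain ⟨B, e, hBfp, hBse⟩ := Stmt15Aux.fg_strong_quotient hC hA
  haveI : StrongEpi e := hBse
  obtain ⟨re⟩ := hreg e hBse
  obtain ⟨K, p, q, hpb⟩ := Stmt15Aux.exists_kernelPair hC e hBfp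
  have hKfg : IsFinitelyGenerated K := hker e p q (Stmt15Aux.fp_fg hBfp) hpb
  obtain ⟨K', e', hK'fp, hK'se⟩ := Stmt15Aux.fg_strong_quotient hC hKfg
  haveI : StrongEpi e' := hK'se
  intro J SJ FJ Dg cc ⟨hcc⟩
  refine Stmt15Aux.mk_mapped_isColimit cc (fun t => ?_) (fun j u v huv => ?_)
  · obtain ⟨j, h, hh⟩ := Stmt15Aux.fp_surj hBfp hcc (e ≫ t)
    have h1 : (e' ≫ p ≫ h) ≫ cc.ι.app j = (e' ≫ q ≫ h) ≫ cc.ι.app j := by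
      have hpe : p ≫ e = q ≫ e := hpb.w
      simp only [Category.assoc]
      rw [hh, ← Category.assoc p, ← Category.assoc q, hpe]
    obtain ⟨l, w, hw⟩ := Stmt15Aux.fp_merge hK'fp hcc (e' ≫ p ≫ h) (e' ≫ q ≫ h) h1
    have h2 : p ≫ h ≫ Dg.map w = q ≫ h ≫ Dg.map w := by
      refine (cancel_epi e').1 ?_
      simp only [Category.assoc] at hw ⊢
      exact hw
    obtain ⟨d, hd⟩ := Stmt15Aux.regular_desc e re hpb (h ≫ Dg.map w) h2
    refine ⟨l, d, (cancel_epi e).1 ?_⟩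
    rw [← Category.assoc, hd, Category.assoc, cc.w w, hh]
  · obtain ⟨l, w, hw⟩ := Stmt15Aux.fp_merge hBfp hcc (e ≫ u) (e ≫ v) (by
      simp only [Category.assoc]; rw [huv])
    refine ⟨l, w, (cancel_epi e).1 ?_⟩
    simp only [Category.assoc] at hw ⊢
    exact hw
end

section
/- A finitary set functor F is super-finitary if and only if it is a quotient of a functor A × Id^n for some finite set A and natural number n, where quotient means a natural transformation with surjective components. -/
open CategoryTheory Limits Function

universe u

/-- A functor is finitary if it preserves filtered colimits. -/
def IsFinitarySet (F : Type u ⥤ Type u) : Prop :=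
  ∀ (J : Type u) [SmallCategory J] [IsFiltered J] (Dg : J ⥤ Type u) (cc : Cocone Dg),
    Nonempty (IsColimit cc) → Nonempty (IsColimit (F.mapCocone cc))

/-- A set functor is super-finitary if there is `n : ℕ` with `F n` finite and every
element of `F X` lies in the image of `F f` for some `f : n → X`. -/
def SuperFinitary (F : Type u ⥤ Type u) : Prop :=
  ∃ n : ℕ, Finite (F.obj (ULift (Fin n))) ∧
    ∀ (X : Type u) (x : F.obj X), ∃ (f : ULift.{u} (Fin n) → X) (y : F.obj (ULift (Fin n))),
      F.map (TypeCat.ofHom f) y = x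

/-- The set functor `A × Id^n`. -/
def prodPow (A : Type u) (n : ℕ) : Type u ⥤ Type u where
  obj X := A × (ULift.{u} (Fin n) → X)
  map f := TypeCat.ofHom fun p => (p.1, f ∘ p.2)

/-- A finitary set functor is super-finitary iff it is a quotient (componentwise
surjective natural transformation) of `A × Id^n` for some finite `A` and `n : ℕ`. -/
theorem stmt_16 (F : Type u ⥤ Type u) (hF : IsFinitarySet F) :
    SuperFinitary F ↔
      ∃ (A : Type u) (n : ℕ), Finite A ∧
        ∃ ε : prodPow A n ⟶ F, ∀ X : Type u, Surjective (ε.app X) := by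
  constructor
  · rintro ⟨n, hfin, hsurj⟩
    refine ⟨F.obj (ULift (Fin n)), n, hfin, ⟨?_, ?_⟩⟩
    · exact
      { app := fun X => TypeCat.ofHom fun p => F.map (TypeCat.ofHom p.2) p.1
        naturality := by
          intro X Y g
          ext p
          show F.map (TypeCat.ofHom (g ∘ p.2)) p.1 = _
          have : TypeCat.ofHom (g ∘ p.2) = TypeCat.ofHom p.2 ≫ g := rfl
          rw [this, F.map_comp]
          rfl }
    · intro X x
      obtain ⟨f, y, hy⟩ := hsurj X x
      exact ⟨(y, f), hy⟩
  · rintro ⟨A, n, hA, ε, hsurj⟩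
    refine ⟨n, ?_, ?_⟩
    · have : Finite ((prodPow A n).obj (ULift (Fin n))) := by
        dsimp [prodPow]; infer_instance
      exact Finite.of_surjective _ (hsurj (ULift (Fin n)))
    · intro X x
      obtain ⟨⟨a, f⟩, ha⟩ := hsurj X x
      refine ⟨f, ε.app (ULift (Fin n)) (a, id), ?_⟩
      have := congrFun (congrArg (fun h => (ConcreteCategory.hom h : _ → _)) (ε.naturality (TypeCat.ofHom f))) (show (prodPow A n).obj (ULift (Fin n)) from (a, id))
      simp only [ConcreteCategory.comp_apply] at this
      refine Eq.trans this.symm ?_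
      exact ha
end

section
/- Every subfunctor of the representable set functor Hom(n, −), for n a natural number, is super-finitary. -/
open CategoryTheory Limits Function

universe u

/-- Every subfunctor of the representable set functor `Hom(n, −)` is super-finitary. -/
theorem stmt_17 (n : ℕ) (G : Type u ⥤ Type u)
    (μ : G ⟶ coyoneda.obj (Opposite.op (ULift.{u} (Fin n))))
    (hμ : ∀ X : Type u, Injective (μ.app X)) :
    SuperFinitary G := by
  unfold SuperFinitary
  classical
  by_cases h0 : Nonempty (G.obj (ULift.{u} (Fin 0)))
  · have : Finite (ULift.{u} (Fin n) → ULift.{u} (Fin 0)) := inferInstance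
    refine ⟨0, Finite.of_injective (β := ULift.{u} (Fin n) → ULift.{u} (Fin 0)) (fun y => ((show ULift.{u} (Fin n) ⟶ ULift.{u} (Fin 0) from μ.app _ y) : ULift.{u} (Fin n) → ULift.{u} (Fin 0))) (fun a b hab => hμ _ (ConcreteCategory.hom_ext _ _ (congrFun hab))), ?_⟩
    intro X x
    obtain ⟨y⟩ := h0
    refine ⟨fun i => i.down.elim0, y, hμ X ?_⟩
    refine ConcreteCategory.hom_ext (C := Type u) (X := ULift.{u} (Fin n)) (Y := X) _ _ fun i => ?_
    exact ((show ULift.{u} (Fin n) ⟶ ULift.{u} (Fin 0) from μ.app _ y) i).down.elim0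
  · have : Finite (ULift.{u} (Fin n) → ULift.{u} (Fin (n+1))) := inferInstance
    refine ⟨n+1, Finite.of_injective (β := ULift.{u} (Fin n) → ULift.{u} (Fin (n+1))) (fun y => ((show ULift.{u} (Fin n) ⟶ ULift.{u} (Fin (n+1)) from μ.app _ y) : ULift.{u} (Fin n) → ULift.{u} (Fin (n+1)))) (fun a b hab => hμ _ (ConcreteCategory.hom_ext _ _ (congrFun hab))), ?_⟩
    intro X x
    have hX : Nonempty X := by
      by_contra hX
      exact h0 ⟨G.map (TypeCat.ofHom (fun z => ((hX ⟨z⟩).elim : ULift.{u} (Fin 0)))) x⟩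
    obtain ⟨x0⟩ := hX
    set g : ULift.{u} (Fin n) → X := ⇑(show ULift.{u} (Fin n) ⟶ X from μ.app X x) with hg
    set h : X → ULift.{u} (Fin (n+1)) := fun z =>
      if hz : ∃ i, g i = z then ⟨(hz.choose.down).castSucc⟩ else ⟨Fin.last n⟩ with hh
    set f : ULift.{u} (Fin (n+1)) → X := fun j =>
      if hj : (j.down : ℕ) < n then g ⟨⟨j.down, hj⟩⟩ else x0 with hf
    refine ⟨f, G.map (TypeCat.ofHom h) x, hμ X ?_⟩
    have h1 : μ.app X (G.map (TypeCat.ofHom f) (G.map (TypeCat.ofHom h) x)) = TypeCat.ofHom (f ∘ h ∘ g) := by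
      have n1 := NatTrans.naturality_apply μ (TypeCat.ofHom f) (G.map (TypeCat.ofHom h) x)
      have n2 := NatTrans.naturality_apply μ (TypeCat.ofHom h) x
      simp only [types_comp_apply] at n1 n2
      rw [n1, n2]
      rfl
    rw [h1]
    refine ConcreteCategory.hom_ext (C := Type u) (X := ULift.{u} (Fin n)) (Y := X) _ _ fun i => ?_
    show (f ∘ h ∘ g) i = g i
    have hex : ∃ i', g i' = g i := ⟨i, rfl⟩
    have hspec : g hex.choose = g i := hex.choose_spec
    have hgi : h (g i) = ({ down := hex.choose.down.castSucc } : ULift.{u} (Fin (n+1))) := by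
      simp only [hh]
      rw [dif_pos hex]
    simp only [Function.comp_apply, hgi, hf]
    have hlt : ((({ down := hex.choose.down.castSucc } : ULift.{u} (Fin (n+1))).down : Fin (n+1)) : ℕ) < n := by
      simp
    rw [dif_pos hlt]
    have he : ({ down := ⟨(({ down := hex.choose.down.castSucc } : ULift.{u} (Fin (n+1))).down : ℕ), hlt⟩ } : ULift.{u} (Fin n)) = hex.choose := by
      ext
      simp
    rw [he, hspec]
end
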